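/- arXiv:2601.22411 — 9 statements merged into one kernel-verified Lean document; each statement's English description precedes it below -/
import Mathlib

section
/- Let Γ and G be groups and f : Γ → G any map. Then for every x ∈ Γ, f(x)⁻¹ D_f f(x) ⊆ D_f D_f D_f⁻¹, where D_f is the defect set of f. -/
open scoped Pointwise

/-- The defect set of a map `f : Γ → G`:
`D_f = { f(y)⁻¹ f(x)⁻¹ f(xy) : x, y ∈ Γ }`. -/
def defectSet {Γ G : Type*} [Group Γ] [Group G] (f : Γ → G) : Set G :=
  {d | ∃ x y : Γ, d = (f y)⁻¹ * (f x)⁻¹ * f (x * y)}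

/-- For any map `f : Γ → G` and any `x ∈ Γ`,
`f(x)⁻¹ D_f f(x) ⊆ D_f D_f D_f⁻¹`. -/
theorem defect_conj {Γ G : Type*} [Group Γ] [Group G] (f : Γ → G) (x : Γ) :
    (fun d => (f x)⁻¹ * d * f x) '' defectSet f ⊆
      defectSet f * defectSet f * (defectSet f)⁻¹ := by
  rintro g ⟨d, ⟨a, b, rfl⟩, rfl⟩
  have key : (f x)⁻¹ * ((f b)⁻¹ * (f a)⁻¹ * f (a * b)) * f x =
      ((f x)⁻¹ * (f b)⁻¹ * f (b * x)) * ((f (b * x))⁻¹ * (f a)⁻¹ * f (a * (b * x))) *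
        ((f x)⁻¹ * (f (a * b))⁻¹ * f (a * b * x))⁻¹ := by
    rw [← mul_assoc a b x]
    group
  simp only [key]
  exact Set.mul_mem_mul (Set.mul_mem_mul ⟨b, x, rfl⟩ ⟨a, b * x, rfl⟩)
    (Set.inv_mem_inv.mpr ⟨a * b, x, rfl⟩)
end

section
/- For every m ≥ 1 there exists k ∈ ℕ (depending only on m) such that for every pair of groups Γ, G, every map f : Γ → G, and all y₁, …, y_m, z₁, …, z_m ∈ Γ, one has f(y₁ z₁⁻¹ y₂ z₂⁻¹ ⋯ y_m z_m⁻¹) ∈ f(y₁) f(z₁)⁻¹ f(y₂) f(z₂)⁻¹ ⋯ f(y_m) f(z_m)⁻¹ (D_f ∪ D_f⁻¹)ᵏ, where D_f is the defect set of f. -/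
/-!
Write `S = D_f ∪ D_f⁻¹` and `δ(x, y) = f(y)⁻¹ f(x)⁻¹ f(xy)`. The defect identities give
`f(y z⁻¹) ∈ f(y) f(z)⁻¹ S³`, and the cocycle relation
`f(g)⁻¹ δ(x, y) f(g) = δ(y, g) δ(x, yg) δ(xy, g)⁻¹`
shows that conjugating by `f(g)` maps `S` into `S³`; since `f(g) f(g⁻¹) ∈ S²`, conjugating by
`f(g)⁻¹` maps `S` into `S⁷`. Hence an error term in `Sⁿ` can be moved to the right past a factor
`f(y) f(z)⁻¹` at the price of landing in `S²¹ⁿ`, and induction on `m` gives the exponent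
`k(m+1) = 21 k(m) + 4`.
-/

open scoped Pointwise

universe u v

section ConjPow

variable {G : Type*} [Group G]

lemma Set.mul_mem_pow_add {S : Set G} {m n : ℕ} {a b : G} (ha : a ∈ S ^ m) (hb : b ∈ S ^ n) :
    a * b ∈ S ^ (m + n) := by
  rw [pow_add]
  exact Set.mul_mem_mul ha hb

lemma Set.mul_mem_pow_succ {S : Set G} {n : ℕ} {a b : G} (ha : a ∈ S ^ n) (hb : b ∈ S) :
    a * b ∈ S ^ (n + 1) := by
  rw [pow_succ]
  exact Set.mul_mem_mul ha hb

lemma Set.inv_mem_pow_of_inv_eq {S : Set G} (hS : S⁻¹ = S) {n : ℕ} {a : G} (ha : a ∈ S ^ n) :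
    a⁻¹ ∈ S ^ n := by
  rwa [← Set.mem_inv, ← inv_pow, hS]

lemma Set.conj_mem_pow_mul {S : Set G} {a : G} {c : ℕ} (h : ∀ s ∈ S, a⁻¹ * s * a ∈ S ^ c) :
    ∀ {n : ℕ} {x : G}, x ∈ S ^ n → a⁻¹ * x * a ∈ S ^ (c * n)
  | 0, x, hx => by
    rw [pow_zero, Set.mem_one] at hx
    simp [hx]
  | n + 1, _, hx => by
    rw [pow_succ] at hx
    obtain ⟨x, hx, s, hs, rfl⟩ := hx
    rw [show a⁻¹ * (x * s) * a = (a⁻¹ * x * a) * (a⁻¹ * s * a) by group, Nat.mul_succ]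
    exact Set.mul_mem_pow_add (conj_mem_pow_mul h hx) (h s hs)

end ConjPow

section Defect

variable {Γ G : Type*} [Group Γ] [Group G] (f : Γ → G)

def symmDefectSet : Set G :=
  defectSet f ∪ (defectSet f)⁻¹

lemma symmDefectSet_inv : (symmDefectSet f)⁻¹ = symmDefectSet f := by
  rw [symmDefectSet, Set.union_inv, inv_inv, Set.union_comm]

lemma mem_defectSet (x y : Γ) : (f y)⁻¹ * (f x)⁻¹ * f (x * y) ∈ defectSet f :=
  ⟨x, y, rfl⟩

lemma mem_symmDefectSet (x y : Γ) : (f y)⁻¹ * (f x)⁻¹ * f (x * y) ∈ symmDefectSet f :=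
  Or.inl (mem_defectSet f x y)

lemma inv_mem_symmDefectSet (x y : Γ) :
    ((f y)⁻¹ * (f x)⁻¹ * f (x * y))⁻¹ ∈ symmDefectSet f :=
  Or.inr (Set.inv_mem_inv.mpr (mem_defectSet f x y))

lemma map_one_mem_symmDefectSet : f 1 ∈ symmDefectSet f := by
  simpa using inv_mem_symmDefectSet f 1 1

lemma map_mul_map_inv_mem_sq (g : Γ) : f g * f g⁻¹ ∈ symmDefectSet f ^ 2 := by
  have hsplit : f g * f g⁻¹ = f 1 * ((f g⁻¹)⁻¹ * (f g)⁻¹ * f (g * g⁻¹))⁻¹ := by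
    rw [mul_inv_cancel]
    group
  rw [hsplit, sq]
  exact Set.mul_mem_mul (map_one_mem_symmDefectSet f) (inv_mem_symmDefectSet f g g⁻¹)

lemma exists_map_mul_inv_eq (y z : Γ) :
    ∃ e ∈ symmDefectSet f ^ 3, f (y * z⁻¹) = f y * (f z)⁻¹ * e := by
  refine ⟨f z * f z⁻¹ * ((f z⁻¹)⁻¹ * (f y)⁻¹ * f (y * z⁻¹)), ?_, by group⟩
  exact Set.mul_mem_pow_succ (map_mul_map_inv_mem_sq f z) (mem_symmDefectSet f y z⁻¹)

lemma conj_map_mem_pow_three (g : Γ) :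
    ∀ s ∈ symmDefectSet f, (f g)⁻¹ * s * f g ∈ symmDefectSet f ^ 3 := by
  have hD : ∀ x y : Γ,
      (f g)⁻¹ * ((f y)⁻¹ * (f x)⁻¹ * f (x * y)) * f g ∈ symmDefectSet f ^ 3 := by
    intro x y
    have hcocycle : (f g)⁻¹ * ((f y)⁻¹ * (f x)⁻¹ * f (x * y)) * f g =
        ((f g)⁻¹ * (f y)⁻¹ * f (y * g)) * ((f (y * g))⁻¹ * (f x)⁻¹ * f (x * (y * g))) *
          ((f g)⁻¹ * (f (x * y))⁻¹ * f (x * y * g))⁻¹ := by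
      rw [← mul_assoc x y g]
      group
    rw [hcocycle, pow_succ, sq]
    exact Set.mul_mem_mul (Set.mul_mem_mul (mem_symmDefectSet f y g)
      (mem_symmDefectSet f x (y * g))) (inv_mem_symmDefectSet f (x * y) g)
  rintro s (⟨x, y, rfl⟩ | hs)
  · exact hD x y
  · obtain ⟨x, y, hs⟩ := Set.mem_inv.mp hs
    rw [← inv_inv s, hs, show ∀ a b : G, a⁻¹ * b⁻¹ * a = (a⁻¹ * b * a)⁻¹ by intros; group]
    exact Set.inv_mem_pow_of_inv_eq (symmDefectSet_inv f) (hD x y)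

lemma conj_map_inv_mem_pow_seven (g : Γ) :
    ∀ s ∈ symmDefectSet f, (f g)⁻¹⁻¹ * s * (f g)⁻¹ ∈ symmDefectSet f ^ 7 := by
  intro s hs
  have hu := map_mul_map_inv_mem_sq f g
  rw [show (f g)⁻¹⁻¹ * s * (f g)⁻¹ =
      (f g * f g⁻¹) * ((f g⁻¹)⁻¹ * s * f g⁻¹) * (f g * f g⁻¹)⁻¹ by group]
  exact Set.mul_mem_pow_add (Set.mul_mem_pow_add hu (conj_map_mem_pow_three f g⁻¹ s hs))
    (Set.inv_mem_pow_of_inv_eq (symmDefectSet_inv f) hu)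

lemma conj_map_mul_map_inv_mem_pow (y z : Γ) {n : ℕ} {x : G} (hx : x ∈ symmDefectSet f ^ n) :
    (f y * (f z)⁻¹)⁻¹ * x * (f y * (f z)⁻¹) ∈ symmDefectSet f ^ (21 * n) := by
  have hpair : ∀ s ∈ symmDefectSet f,
      (f y * (f z)⁻¹)⁻¹ * s * (f y * (f z)⁻¹) ∈ symmDefectSet f ^ (7 * 3) := by
    intro s hs
    rw [show (f y * (f z)⁻¹)⁻¹ * s * (f y * (f z)⁻¹) =
        (f z)⁻¹⁻¹ * ((f y)⁻¹ * s * f y) * (f z)⁻¹ by group]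
    exact Set.conj_mem_pow_mul (conj_map_inv_mem_pow_seven f z) (conj_map_mem_pow_three f y s hs)
  exact Set.conj_mem_pow_mul hpair hx

def defectExponent : ℕ → ℕ
  | 0 => 1
  | n + 1 => 21 * defectExponent n + 4

lemma exists_map_prod_mul_inv_eq (L : List (Γ × Γ)) :
    ∃ d ∈ symmDefectSet f ^ defectExponent L.length,
      f (L.map fun p => p.1 * p.2⁻¹).prod = (L.map fun p => f p.1 * (f p.2)⁻¹).prod * d := by
  induction L using List.reverseRecOn with
  | nil => exact ⟨f 1, by simpa [defectExponent] using map_one_mem_symmDefectSet f, by simp⟩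
  | append_singleton L p ih =>
    obtain ⟨c, hc, hL⟩ := ih
    obtain ⟨e, he, hp⟩ := exists_map_mul_inv_eq f p.1 p.2
    set P := (L.map fun p => p.1 * p.2⁻¹).prod
    set δ := (f (p.1 * p.2⁻¹))⁻¹ * (f P)⁻¹ * f (P * (p.1 * p.2⁻¹)) with hδ
    refine ⟨(f p.1 * (f p.2)⁻¹)⁻¹ * c * (f p.1 * (f p.2)⁻¹) * e * δ, ?_, ?_⟩
    · rw [List.length_append, List.length_singleton, defectExponent]
      exact Set.mul_mem_pow_succ (Set.mul_mem_pow_add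
        (conj_map_mul_map_inv_mem_pow f p.1 p.2 hc) he) (mem_symmDefectSet f _ _)
    · simp only [List.map_append, List.map_singleton, List.prod_append, List.prod_singleton]
      rw [show f (P * (p.1 * p.2⁻¹)) = f P * f (p.1 * p.2⁻¹) * δ by rw [hδ]; group, hL, hp]
      group

end Defect

theorem long_product_general (m : ℕ) :
    ∃ k : ℕ, ∀ (Γ : Type u) (G : Type v) [Group Γ] [Group G] (f : Γ → G)
      (y z : Fin m → Γ),
      ∃ d ∈ (defectSet f ∪ (defectSet f)⁻¹) ^ k,
        f ((List.ofFn fun i => y i * (z i)⁻¹).prod) =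
          (List.ofFn fun i => f (y i) * (f (z i))⁻¹).prod * d := by
  refine ⟨defectExponent m, fun Γ G _ _ f y z => ?_⟩
  simpa [symmDefectSet, List.map_ofFn, Function.comp_def] using
    exists_map_prod_mul_inv_eq f (List.ofFn fun i => (y i, z i))

/-- For every `m ≥ 1` there is `k ∈ ℕ`, depending only on `m`, such that for any map
`f : Γ → G` between groups and any `y₁, …, y_m, z₁, …, z_m ∈ Γ`,
`f(y₁ z₁⁻¹ ⋯ y_m z_m⁻¹) ∈ f(y₁) f(z₁)⁻¹ ⋯ f(y_m) f(z_m)⁻¹ (D_f ∪ D_f⁻¹)ᵏ`. -/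
theorem long_product (m : ℕ) (hm : 1 ≤ m) :
    ∃ k : ℕ, ∀ (Γ : Type u) (G : Type v) [Group Γ] [Group G] (f : Γ → G)
      (y z : Fin m → Γ),
      ∃ d ∈ (defectSet f ∪ (defectSet f)⁻¹) ^ k,
        f ((List.ofFn fun i => y i * (z i)⁻¹).prod) =
          (List.ofFn fun i => f (y i) * (f (z i))⁻¹).prod * d :=
  long_product_general m
end

section
/- Let Γ and G be groups and f : Γ → G any map, with defect set D_f. If x ∈ G can be written as a product x = a₁ a₂ ⋯ a_k with each a_i ∈ D_f ∪ D_f⁻¹, then for every γ ∈ Γ one has f(γ)⁻¹ x f(γ) ∈ (D_f² D_f⁻¹ ∪ D_f D_f⁻²)ᵏ. -/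
/-!
Writing `δ(x, y) = f(y)⁻¹ f(x)⁻¹ f(xy)`, expanding `f(xyγ)` in two ways gives the identity
`f(γ)⁻¹ δ(x, y) f(γ) = δ(y, γ) δ(x, yγ) δ(xy, γ)⁻¹`, so conjugation by `f(γ)` maps `D_f` into
`D_f² D_f⁻¹` and, after inverting, `D_f⁻¹` into `D_f D_f⁻²`. Conjugation is a homomorphism, so a
word of length `k` in `D_f ∪ D_f⁻¹` is conjugated letter by letter into the `k`-th power.
-/

open scoped Pointwise

theorem Set.list_prod_mem_pow {M : Type*} [Monoid M] {S : Set M} {L : List M}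
    (hL : ∀ a ∈ L, a ∈ S) : L.prod ∈ S ^ L.length := by
  induction L with
  | nil => exact Set.one_mem_one
  | cons a L ih =>
    rw [List.prod_cons, List.length_cons, pow_succ']
    exact Set.mul_mem_mul (hL a List.mem_cons_self)
      (ih fun b hb => hL b (List.mem_cons_of_mem a hb))

theorem Set.conj_list_prod_mem_pow {G : Type*} [Group G] {S : Set G} (g : G) (L : List G)
    (hL : ∀ a ∈ L, g⁻¹ * a * g ∈ S) : g⁻¹ * L.prod * g ∈ S ^ L.length := by
  have hconj : g⁻¹ * L.prod * g = (L.map (MulAut.conj g⁻¹)).prod := by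
    rw [← map_list_prod, MulAut.conj_apply, inv_inv]
  rw [hconj, ← L.length_map (MulAut.conj g⁻¹)]
  refine Set.list_prod_mem_pow fun b hb => ?_
  obtain ⟨a, ha, rfl⟩ := List.mem_map.mp hb
  simpa using hL a ha

section Defect

variable {Γ G : Type*} [Group Γ] [Group G] (f : Γ → G)

def defect (x y : Γ) : G := (f y)⁻¹ * (f x)⁻¹ * f (x * y)

theorem defect_mem_defectSet (x y : Γ) : defect f x y ∈ defectSet f := ⟨x, y, rfl⟩

theorem conj_defect (x y γ : Γ) :
    (f γ)⁻¹ * defect f x y * f γ =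
      defect f y γ * defect f x (y * γ) * (defect f (x * y) γ)⁻¹ := by
  simp only [defect, mul_assoc]
  group

theorem conj_mem_of_mem_defectSet {d : G} (hd : d ∈ defectSet f) (γ : Γ) :
    (f γ)⁻¹ * d * f γ ∈ defectSet f * defectSet f * (defectSet f)⁻¹ := by
  obtain ⟨x, y, rfl⟩ := hd
  rw [← defect, conj_defect]
  exact Set.mul_mem_mul
    (Set.mul_mem_mul (defect_mem_defectSet f _ _) (defect_mem_defectSet f _ _))
    (Set.inv_mem_inv.mpr (defect_mem_defectSet f _ _))

theorem conj_mem_of_mem_inv_defectSet {d : G} (hd : d ∈ (defectSet f)⁻¹) (γ : Γ) :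
    (f γ)⁻¹ * d * f γ ∈ defectSet f * ((defectSet f)⁻¹ * (defectSet f)⁻¹) := by
  simpa only [mul_inv_rev, inv_inv, mul_assoc] using
    Set.inv_mem_inv.mpr (conj_mem_of_mem_defectSet f hd γ)

end Defect

/-- If `x = a₁ ⋯ a_k` with each `a_i ∈ D_f ∪ D_f⁻¹`, then for every `γ ∈ Γ`,
`f(γ)⁻¹ x f(γ) ∈ (D_f² D_f⁻¹ ∪ D_f D_f⁻²)ᵏ`. -/
theorem conj_of_word_in_defect {Γ G : Type*} [Group Γ] [Group G] (f : Γ → G)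
    (L : List G) (hL : ∀ a ∈ L, a ∈ defectSet f ∪ (defectSet f)⁻¹) (γ : Γ) :
    (f γ)⁻¹ * L.prod * f γ ∈
      (defectSet f * defectSet f * (defectSet f)⁻¹ ∪
        defectSet f * ((defectSet f)⁻¹ * (defectSet f)⁻¹)) ^ L.length :=
  Set.conj_list_prod_mem_pow _ L fun a ha =>
    (hL a ha).imp (conj_mem_of_mem_defectSet f · γ) (conj_mem_of_mem_inv_defectSet f · γ)
end

section
/- Let Γ and G be groups and f : Γ → G any map, with defect set D_f. Then every element of the subgroup of G generated by f(Γ) normalizes the subgroup of G generated by D_f; that is, for every w in the subgroup generated by f(Γ), w⁻¹ ⟨D_f⟩ w = ⟨D_f⟩. -/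
namespace defectSet

variable {Γ G : Type*} [Group Γ] [Group G] (f : Γ → G)

theorem mem (x y : Γ) : (f y)⁻¹ * (f x)⁻¹ * f (x * y) ∈ defectSet f :=
  ⟨x, y, rfl⟩

theorem apply_one_mem_closure : f 1 ∈ Subgroup.closure (defectSet f) := by
  simpa using inv_mem (Subgroup.subset_closure (mem f 1 1))

theorem conj_defect_eq (a x y : Γ) :
    (f a)⁻¹ * ((f y)⁻¹ * (f x)⁻¹ * f (x * y)) * f a =
      ((f a)⁻¹ * (f y)⁻¹ * f (y * a)) * ((f (y * a))⁻¹ * (f x)⁻¹ * f (x * (y * a))) *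
        ((f a)⁻¹ * (f (x * y))⁻¹ * f (x * y * a))⁻¹ := by
  rw [mul_assoc x y a]
  group

theorem inv_apply_mul_mem_closure (a : Γ) {g : G}
    (hg : g ∈ Subgroup.closure (defectSet f)) :
    (f a)⁻¹ * g * f a ∈ Subgroup.closure (defectSet f) := by
  suffices Subgroup.closure (defectSet f) ≤
      (Subgroup.closure (defectSet f)).comap (MulAut.conj (f a)⁻¹).toMonoidHom by
    simpa using this hg
  rw [Subgroup.closure_le]
  rintro _ ⟨x, y, rfl⟩
  simp only [Set.mem_preimage, SetLike.mem_coe, Subgroup.coe_comap, MulEquiv.coe_toMonoidHom,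
    MulAut.conj_apply, inv_inv, conj_defect_eq]
  exact mul_mem (mul_mem (Subgroup.subset_closure (mem f y a))
    (Subgroup.subset_closure (mem f x (y * a)))) (inv_mem (Subgroup.subset_closure (mem f (x * y) a)))

theorem apply_mul_inv_mem_closure (a : Γ) {g : G}
    (hg : g ∈ Subgroup.closure (defectSet f)) :
    f a * g * (f a)⁻¹ ∈ Subgroup.closure (defectSet f) := by
  set n := f 1 * ((f a⁻¹)⁻¹ * (f a)⁻¹ * f (a * a⁻¹))⁻¹
  have hn : n ∈ Subgroup.closure (defectSet f) :=
    mul_mem (apply_one_mem_closure f) (inv_mem (Subgroup.subset_closure (mem f a a⁻¹)))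
  have hconj_eq : f a * g * (f a)⁻¹ = n * ((f a⁻¹)⁻¹ * g * f a⁻¹) * n⁻¹ := by
    simp only [n, mul_inv_cancel a]
    group
  rw [hconj_eq]
  exact mul_mem (mul_mem hn (by simpa using inv_apply_mul_mem_closure f a⁻¹ hg)) (inv_mem hn)

theorem apply_mem_normalizer (a : Γ) :
    f a ∈ Subgroup.normalizer (Subgroup.closure (defectSet f) : Set G) := by
  refine Subgroup.mem_normalizer_iff.mpr fun g => ⟨apply_mul_inv_mem_closure f a, fun hg => ?_⟩
  simpa [mul_assoc] using inv_apply_mul_mem_closure f a hg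

theorem closure_range_le_normalizer :
    Subgroup.closure (Set.range f) ≤
      Subgroup.normalizer (Subgroup.closure (defectSet f) : Set G) :=
  (Subgroup.closure_le _).mpr <| Set.range_subset_iff.mpr (apply_mem_normalizer f)

end defectSet

/-- Every element of the subgroup generated by `f(Γ)` normalizes the subgroup
generated by the defect set `D_f`. -/
theorem image_normalizes_defect_subgroup {Γ G : Type*} [Group Γ] [Group G]
    (f : Γ → G) (w : G) (hw : w ∈ Subgroup.closure (Set.range f)) :
    (fun x => w⁻¹ * x * w) '' (Subgroup.closure (defectSet f) : Set G) =
      (Subgroup.closure (defectSet f) : Set G) := by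
  have hw' := inv_mem (defectSet.closure_range_le_normalizer f hw)
  have hconj : ⇑(MulAut.conj w⁻¹) = fun x => w⁻¹ * x * w :=
    funext fun x => by rw [MulAut.conj_apply, inv_inv]
  rw [← hconj]
  exact Subgroup.mem_normalizer_iff_conj_image_eq.mp hw'
end

section
/- Let G be a locally compact Hausdorff topological group, C a compact normal subgroup of G, and π : G → G/C the quotient homomorphism (with G/C carrying the quotient topology). Let Γ be a group. Then: (i) if f : Γ → G is a quasihomomorphism, then π ∘ f : Γ → G/C is a quasihomomorphism and D_{π∘f} = π(D_f); (ii) if g : Γ → G/C is a quasihomomorphism and ĝ : Γ → G is any map with π ∘ ĝ = g, then ĝ is a quasihomomorphism. -/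
open Pointwise

theorem defectSet_comp_monoidHom {Γ G H : Type*} [Group Γ] [Group G] [Group H]
    (φ : G →* H) (f : Γ → G) : defectSet (φ ∘ f) = φ '' defectSet f := by
  ext d
  constructor
  · rintro ⟨x, y, rfl⟩
    exact ⟨_, ⟨x, y, rfl⟩, by simp⟩
  · rintro ⟨_, ⟨x, y, rfl⟩, rfl⟩
    exact ⟨x, y, by simp⟩

theorem QuotientGroup.isProperMap_mk {G : Type*} [Group G] [TopologicalSpace G]
    [IsTopologicalGroup G] {H : Subgroup G} (hH : IsCompact (H : Set G)) :
    IsProperMap ((↑) : G → G ⧸ H) := by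
  refine isProperMap_iff_isClosedMap_and_compact_fibers.mpr
    ⟨continuous_mk, isClosedMap_coe hH, fun q => ?_⟩
  obtain ⟨g, rfl⟩ := mk_surjective q
  rw [← Set.image_singleton, preimage_image_mk_eq_mul]
  exact isCompact_singleton.mul hH

theorem quotient_by_compact_general {Γ G : Type*} [Group Γ] [Group G]
    [TopologicalSpace G] [IsTopologicalGroup G]
    (C : Subgroup G) [C.Normal] (hC : IsCompact (C : Set G)) :
    -- (i)
    (∀ f : Γ → G,
      (∃ K : Set G, IsCompact K ∧ defectSet f ⊆ K) →
      defectSet ((QuotientGroup.mk' C) ∘ f) = (QuotientGroup.mk' C) '' defectSet f ∧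
      ∃ K : Set (G ⧸ C), IsCompact K ∧ defectSet ((QuotientGroup.mk' C) ∘ f) ⊆ K) ∧
    -- (ii)
    (∀ (g : Γ → G ⧸ C) (ghat : Γ → G),
      (∃ K : Set (G ⧸ C), IsCompact K ∧ defectSet g ⊆ K) →
      (∀ γ : Γ, QuotientGroup.mk' C (ghat γ) = g γ) →
      ∃ K : Set G, IsCompact K ∧ defectSet ghat ⊆ K) := by
  refine ⟨fun f ⟨K, hK, hfK⟩ => ?_, fun g ghat ⟨K, hK, hgK⟩ hlift => ?_⟩
  · rw [defectSet_comp_monoidHom]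
    exact ⟨rfl, _ '' K, hK.image QuotientGroup.continuous_mk, Set.image_mono hfK⟩
  · have hg : g = QuotientGroup.mk' C ∘ ghat := funext fun γ => (hlift γ).symm
    refine ⟨QuotientGroup.mk' C ⁻¹' K,
      (QuotientGroup.isProperMap_mk hC).isCompact_preimage hK, ?_⟩
    rw [← Set.image_subset_iff, ← defectSet_comp_monoidHom, ← hg]
    exact hgK

/-- Quasihomomorphisms pass to and lift along quotients by compact normal subgroups:
(i) if `f : Γ → G` is a quasihomomorphism then so is `π ∘ f : Γ → G/C`, with
`D_{π∘f} = π(D_f)`; (ii) any set-theoretic lift of a quasihomomorphism `g : Γ → G/C`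
is a quasihomomorphism. -/
theorem quotient_by_compact {Γ G : Type*} [Group Γ] [Group G]
    [TopologicalSpace G] [IsTopologicalGroup G] [LocallyCompactSpace G] [T2Space G]
    (C : Subgroup G) [C.Normal] (hC : IsCompact (C : Set G)) :
    -- (i)
    (∀ f : Γ → G,
      (∃ K : Set G, IsCompact K ∧ defectSet f ⊆ K) →
      defectSet ((QuotientGroup.mk' C) ∘ f) = (QuotientGroup.mk' C) '' defectSet f ∧
      ∃ K : Set (G ⧸ C), IsCompact K ∧ defectSet ((QuotientGroup.mk' C) ∘ f) ⊆ K) ∧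
    -- (ii)
    (∀ (g : Γ → G ⧸ C) (ghat : Γ → G),
      (∃ K : Set (G ⧸ C), IsCompact K ∧ defectSet g ⊆ K) →
      (∀ γ : Γ, QuotientGroup.mk' C (ghat γ) = g γ) →
      ∃ K : Set G, IsCompact K ∧ defectSet ghat ⊆ K) :=
  quotient_by_compact_general C hC
end

section
/- Let d ≥ 2 and let h be a real d × d matrix. Let (k_n) be a sequence of orthogonal d × d matrices converging to a matrix k, and let a_n be the diagonal matrix with diagonal entries λ_{n,1} ≥ λ_{n,2} ≥ … ≥ λ_{n,d} > 0, where λ_{n,1}/λ_{n,2} → ∞ as n → ∞. Suppose the sequence of matrices a_n⁻¹ k_n⁻¹ h k_n a_n is bounded (there is C with ‖a_n⁻¹ k_n⁻¹ h k_n a_n‖ ≤ C for all n). Then the first column of k⁻¹ h k is a scalar multiple of the first standard basis vector e₁; equivalently, (k⁻¹ h k)_{i,1} = 0 for all i ≥ 2, so h maps the line ℝ·(k e₁) into itself. -/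
open Matrix Filter Topology

/-- Linear-algebra core of the contraction lemma: if `k_n` are orthogonal matrices
converging to `k`, `a_n = diag(λ_{n,1} ≥ … ≥ λ_{n,d} > 0)` with `λ_{n,1}/λ_{n,2} → ∞`,
and the conjugates `a_n⁻¹ k_n⁻¹ h k_n a_n` are bounded, then the first column of
`k⁻¹ h k` is a multiple of `e₁`. -/
theorem contracting_fixes_line {d : ℕ} (hd : 2 ≤ d)
    (h : Matrix (Fin d) (Fin d) ℝ)
    (kseq : ℕ → Matrix (Fin d) (Fin d) ℝ) (k : Matrix (Fin d) (Fin d) ℝ)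
    (horth : ∀ n : ℕ, (kseq n)ᵀ * kseq n = 1)
    (hconv : Tendsto kseq atTop (𝓝 k))
    (lam : ℕ → Fin d → ℝ)
    (hpos : ∀ n : ℕ, ∀ i : Fin d, 0 < lam n i)
    (hmono : ∀ n : ℕ, ∀ i j : Fin d, i ≤ j → lam n j ≤ lam n i)
    (hratio : Tendsto (fun n => lam n ⟨0, by omega⟩ / lam n ⟨1, by omega⟩)
      atTop atTop)
    (hbdd : ∃ C : ℝ, ∀ n : ℕ, ∀ i j : Fin d,
      |(Matrix.diagonal (fun i => (lam n i)⁻¹) * (kseq n)ᵀ * h * kseq n *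
        Matrix.diagonal (lam n)) i j| ≤ C) :
    ∀ i : Fin d, i ≠ ⟨0, by omega⟩ → (kᵀ * h * k) i ⟨0, by omega⟩ = 0 := by
  intro i hi
  obtain ⟨C, hC⟩ := hbdd
  set z0 : Fin d := ⟨0, by omega⟩
  set o1 : Fin d := ⟨1, by omega⟩
  have hC0 : 0 ≤ C := le_trans (abs_nonneg _) (hC 0 z0 z0)
  set f : ℕ → ℝ := fun n => ((kseq n)ᵀ * h * kseq n) i z0 with hf
  -- f converges to the target entry
  have hcont : Continuous (fun A : Matrix (Fin d) (Fin d) ℝ => (Aᵀ * h * A) i z0) := by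
    apply Continuous.matrix_elem
    exact (Continuous.matrix_mul (continuous_id.matrix_transpose.matrix_mul continuous_const)
      continuous_id)
  have h1 : Tendsto f atTop (𝓝 ((kᵀ * h * k) i z0)) := (hcont.tendsto k).comp hconv
  -- entry formula
  have hentry : ∀ n, (Matrix.diagonal (fun i => (lam n i)⁻¹) * (kseq n)ᵀ * h * kseq n *
      Matrix.diagonal (lam n)) i z0 = (lam n i)⁻¹ * f n * lam n z0 := by
    intro n
    have : Matrix.diagonal (fun i => (lam n i)⁻¹) * (kseq n)ᵀ * h * kseq n *
        Matrix.diagonal (lam n)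
        = Matrix.diagonal (fun i => (lam n i)⁻¹) * ((kseq n)ᵀ * h * kseq n) *
          Matrix.diagonal (lam n) := by
        simp only [Matrix.mul_assoc]
    rw [this, Matrix.mul_diagonal, Matrix.diagonal_mul]
  have h1i : o1 ≤ i := by
    have : i.val ≠ 0 := fun hv => hi (Fin.ext hv)
    exact Fin.mk_le_of_le_val (by omega)
  -- bound: |f n| ≤ C * (lam n o1 / lam n z0)
  have hbound : ∀ n, |f n| ≤ C * (lam n o1 / lam n z0) := by
    intro n
    have hb := hC n i z0
    rw [hentry n, abs_mul, abs_mul, abs_inv,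
      abs_of_pos (hpos n i), abs_of_pos (hpos n z0)] at hb
    have hli : lam n i ≤ lam n o1 := hmono n o1 i h1i
    have hp0 := hpos n z0
    have hpi := hpos n i
    have hp1 := hpos n o1
    -- from hb : (lam n i)⁻¹ * |f n| * lam n z0 ≤ C
    have h2 : |f n| * lam n z0 ≤ C * lam n i := by
      have := mul_le_mul_of_nonneg_right hb (le_of_lt hpi)
      calc |f n| * lam n z0 = (lam n i)⁻¹ * |f n| * lam n z0 * lam n i := by
            field_simp
        _ ≤ C * lam n i := this
    have h3 : |f n| * lam n z0 ≤ C * lam n o1 :=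
      h2.trans (mul_le_mul_of_nonneg_left hli hC0)
    calc |f n| = |f n| * lam n z0 / lam n z0 := by field_simp
      _ ≤ C * lam n o1 / lam n z0 := by gcongr
      _ = C * (lam n o1 / lam n z0) := by ring
  -- the bound tends to 0
  have hratio' : Tendsto (fun n => lam n o1 / lam n z0) atTop (𝓝 0) := by
    have := hratio.inv_tendsto_atTop
    convert this using 2 with n
    simp [inv_div]
  have h0 : Tendsto f atTop (𝓝 0) := by
    apply squeeze_zero_norm (fun n => hbound n)
    simpa using hratio'.const_mul C
  exact tendsto_nhds_unique h1 h0
end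

section
/- Let G be a Hausdorff topological group, Γ a group, B a compact subgroup of G, and N a normal subgroup of G. Let f, b, z, d : Γ → G be maps such that for every γ ∈ Γ: f(γ) = b(γ) z(γ) d(γ), b(γ) ∈ B, z(γ) centralizes N (z(γ) x = x z(γ) for all x ∈ N), and d(γ) ∈ N. Assume that f is a quasihomomorphism with D_f ⊆ N, and that d(Γ) is contained in a compact subset of G. Then the map f' : Γ → G defined by f'(γ) := b(γ) z(γ) is a quasihomomorphism, f' is close to f, and D_{f'} ⊆ N. -/
open Pointwise

section Defect

variable {Γ G : Type*} [Group Γ] [Group G] {f g d : Γ → G}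

theorem defect_eq_of_eq_mul (h : ∀ γ, f γ = g γ * d γ) (x y : Γ) :
    (g y)⁻¹ * (g x)⁻¹ * g (x * y) =
      (g y)⁻¹ * d x * g y * d y * ((f y)⁻¹ * (f x)⁻¹ * f (x * y)) * (d (x * y))⁻¹ := by
  simp only [h]
  group

theorem defectSet_subset_subgroup_of_eq_mul (N : Subgroup G) [N.Normal]
    (h : ∀ γ, f γ = g γ * d γ) (hd : ∀ γ, d γ ∈ N) (hf : defectSet f ⊆ N) :
    defectSet g ⊆ N := by
  rintro _ ⟨x, y, rfl⟩
  rw [defect_eq_of_eq_mul h]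
  exact mul_mem (mul_mem (mul_mem (‹N.Normal›.conj_mem' _ (hd x) _) (hd y))
    (hf ⟨x, y, rfl⟩)) (inv_mem (hd (x * y)))

theorem defectSet_subset_mul_of_eq_mul {C Kd Kf : Set G} (h : ∀ γ, f γ = g γ * d γ)
    (hconj : ∀ x y, (g y)⁻¹ * d x * g y ∈ C) (hd : ∀ γ, d γ ∈ Kd) (hf : defectSet f ⊆ Kf) :
    defectSet g ⊆ C * Kd * Kf * Kd⁻¹ := by
  rintro _ ⟨x, y, rfl⟩
  rw [defect_eq_of_eq_mul h]
  exact Set.mul_mem_mul (Set.mul_mem_mul (Set.mul_mem_mul (hconj x y) (hd y))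
    (hf ⟨x, y, rfl⟩)) (Set.inv_mem_inv.mpr (hd (x * y)))

end Defect

theorem conj_mul_eq_conj_of_commute_subgroup {G : Type*} [Group G] {N : Subgroup G} [N.Normal]
    {b z n : G} (hz : ∀ x ∈ N, z * x = x * z) (hn : n ∈ N) :
    (b * z)⁻¹ * n * (b * z) = b⁻¹ * n * b := by
  calc (b * z)⁻¹ * n * (b * z) = z⁻¹ * (b⁻¹ * n * b) * z := by group
    _ = b⁻¹ * n * b := by
      rw [mul_assoc, ← hz _ (‹N.Normal›.conj_mem' n hn b), inv_mul_cancel_left]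

theorem final_modification_general {Γ G : Type*} [Group Γ] [Group G]
    [TopologicalSpace G] [IsTopologicalGroup G]
    (B : Subgroup G) (hB : IsCompact (B : Set G))
    (N : Subgroup G) [N.Normal]
    (f b z d : Γ → G)
    (hdecomp : ∀ γ : Γ, f γ = b γ * z γ * d γ)
    (hb : ∀ γ : Γ, b γ ∈ B)
    (hz : ∀ γ : Γ, ∀ x ∈ N, z γ * x = x * z γ)
    (hd : ∀ γ : Γ, d γ ∈ N)
    (hf : ∃ K : Set G, IsCompact K ∧ defectSet f ⊆ K)
    (hDf : defectSet f ⊆ (N : Set G))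
    (hdbdd : ∃ K : Set G, IsCompact K ∧ ∀ γ : Γ, d γ ∈ K) :
    -- f' := b · z is a quasihomomorphism close to f, with defect in N
    (∃ K : Set G, IsCompact K ∧ defectSet (fun γ => b γ * z γ) ⊆ K) ∧
    (∃ K : Set G, IsCompact K ∧ ∀ γ : Γ, (f γ)⁻¹ * (b γ * z γ) ∈ K) ∧
    defectSet (fun γ => b γ * z γ) ⊆ (N : Set G) := by
  obtain ⟨Kf, hKf, hfKf⟩ := hf
  obtain ⟨Kd, hKd, hdKd⟩ := hdbdd
  have hconj : ∀ x y, (b y * z y)⁻¹ * d x * (b y * z y) ∈ (B : Set G) * Kd * B := by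
    intro x y
    rw [conj_mul_eq_conj_of_commute_subgroup (hz y) (hd x)]
    exact Set.mul_mem_mul (Set.mul_mem_mul (B.inv_mem (hb y)) (hdKd x)) (hb y)
  refine ⟨⟨_, ((((hB.mul hKd).mul hB).mul hKd).mul hKf).mul hKd.inv,
      defectSet_subset_mul_of_eq_mul hdecomp hconj hdKd hfKf⟩,
    ⟨Kd⁻¹, hKd.inv, fun γ => ?_⟩,
    defectSet_subset_subgroup_of_eq_mul N hdecomp hd hDf⟩
  rw [hdecomp γ, mul_inv_rev, inv_mul_cancel_right]
  exact Set.inv_mem_inv.mpr (hdKd γ)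

/-- The final modification: if `f = b·z·d` with `b` taking values in a compact subgroup
`B`, `z` taking values in the centralizer of a normal subgroup `N ⊇ D_f`, and `d`
taking bounded values in `N`, then `f' := b·z` is a quasihomomorphism close to `f`
whose defect is still contained in `N`. -/
theorem final_modification {Γ G : Type*} [Group Γ] [Group G]
    [TopologicalSpace G] [IsTopologicalGroup G] [T2Space G]
    (B : Subgroup G) (hB : IsCompact (B : Set G))
    (N : Subgroup G) [N.Normal]
    (f b z d : Γ → G)
    (hdecomp : ∀ γ : Γ, f γ = b γ * z γ * d γ)
    (hb : ∀ γ : Γ, b γ ∈ B)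
    (hz : ∀ γ : Γ, ∀ x ∈ N, z γ * x = x * z γ)
    (hd : ∀ γ : Γ, d γ ∈ N)
    (hf : ∃ K : Set G, IsCompact K ∧ defectSet f ⊆ K)
    (hDf : defectSet f ⊆ (N : Set G))
    (hdbdd : ∃ K : Set G, IsCompact K ∧ ∀ γ : Γ, d γ ∈ K) :
    -- f' := b · z is a quasihomomorphism close to f, with defect in N
    (∃ K : Set G, IsCompact K ∧ defectSet (fun γ => b γ * z γ) ⊆ K) ∧
    (∃ K : Set G, IsCompact K ∧ ∀ γ : Γ, (f γ)⁻¹ * (b γ * z γ) ∈ K) ∧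
    defectSet (fun γ => b γ * z γ) ⊆ (N : Set G) :=
  final_modification_general B hB N f b z d hdecomp hb hz hd hf hDf hdbdd
end

section
/- Let G ≤ GL_3(ℝ) be the group of real 3 × 3 matrices of block form [[R, v], [0, 1]] with R a 2 × 2 rotation matrix (R ∈ SO(2)) and v ∈ ℝ² (so G realizes SO(2) ⋉ ℝ²). If H is a subgroup of G that is not commutative, then the centralizer of H in G is trivial: the only element g ∈ G satisfying g h = h g for all h ∈ H is the identity matrix. -/
open scoped MatrixGroups
open Matrix

/-- `R ∈ SO(2)`: a 2×2 real matrix with `Rᵀ R = I` and `det R = 1`. -/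
def IsSO2 (R : Matrix (Fin 2) (Fin 2) ℝ) : Prop := Rᵀ * R = 1 ∧ R.det = 1

/-- The 3×3 block matrix `[[R, v], [0, 1]]`. -/
def mkAff (R : Matrix (Fin 2) (Fin 2) ℝ) (v : Fin 2 → ℝ) :
    Matrix (Fin 3) (Fin 3) ℝ :=
  Matrix.of fun i j =>
    if hi : (i : ℕ) < 2 then
      if hj : (j : ℕ) < 2 then R ⟨i, hi⟩ ⟨j, hj⟩ else v ⟨i, hi⟩
    else if (j : ℕ) < 2 then 0 else 1

/-- The subgroup `G = SO(2) ⋉ ℝ²` of `GL_3(ℝ)`, as a subset. -/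
def affSO2 : Set (GL (Fin 3) ℝ) :=
  {g | ∃ (R : Matrix (Fin 2) (Fin 2) ℝ) (v : Fin 2 → ℝ),
    IsSO2 R ∧ (g : Matrix (Fin 3) (Fin 3) ℝ) = mkAff R v}

lemma so2_elim {R : Matrix (Fin 2) (Fin 2) ℝ} (h : IsSO2 R) :
    ∃ a b : ℝ, a^2 + b^2 = 1 ∧ R = !![a, -b; b, a] := by
  obtain ⟨h1, h2⟩ := h
  have e00 : (R 0 0)^2 + (R 1 0)^2 = 1 := by
    have := congrFun (congrFun h1 0) 0
    simp [Matrix.mul_apply, Fin.sum_univ_two, Matrix.one_apply] at this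
    nlinarith [this]
  have e01 : R 0 0 * R 0 1 + R 1 0 * R 1 1 = 0 := by
    have := congrFun (congrFun h1 0) 1
    simp [Matrix.mul_apply, Fin.sum_univ_two, Matrix.one_apply] at this
    nlinarith [this]
  have e11 : (R 0 1)^2 + (R 1 1)^2 = 1 := by
    have := congrFun (congrFun h1 1) 1
    simp [Matrix.mul_apply, Fin.sum_univ_two, Matrix.one_apply] at this
    nlinarith [this]
  have edet : R 0 0 * R 1 1 - R 0 1 * R 1 0 = 1 := by
    rw [Matrix.det_fin_two] at h2; linarith [h2]
  have hd : R 1 1 = R 0 0 := by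
    nlinarith [sq_nonneg (R 1 1 - R 0 0), sq_nonneg (R 1 0 + R 0 1)]
  have hc : R 0 1 = -(R 1 0) := by
    nlinarith [sq_nonneg (R 1 1 - R 0 0), sq_nonneg (R 1 0 + R 0 1)]
  refine ⟨R 0 0, R 1 0, e00, ?_⟩
  ext i j; fin_cases i <;> fin_cases j <;> simp [hc, hd]

lemma mkAff_eq (a b : ℝ) (v : Fin 2 → ℝ) :
    mkAff !![a, -b; b, a] v = !![a, -b, v 0; b, a, v 1; 0, 0, 1] := by
  ext i j; fin_cases i <;> fin_cases j <;> rfl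

lemma comm_iff (a b p0 p1 c d q0 q1 : ℝ) :
    (!![a, -b, p0; b, a, p1; 0, 0, 1] : Matrix (Fin 3) (Fin 3) ℝ) *
      !![c, -d, q0; d, c, q1; 0, 0, 1] =
    !![c, -d, q0; d, c, q1; 0, 0, 1] * !![a, -b, p0; b, a, p1; 0, 0, 1] ↔
    (a * q0 - b * q1 + p0 = c * p0 - d * p1 + q0 ∧
     b * q0 + a * q1 + p1 = d * p0 + c * p1 + q1) := by
  rw [Matrix.mul_fin_three, Matrix.mul_fin_three]
  constructor
  · intro h
    have h1 := congrFun (congrFun h 0) 2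
    have h2 := congrFun (congrFun h 1) 2
    simp at h1 h2
    constructor <;> linarith
  · rintro ⟨h1, h2⟩
    ext i j
    fin_cases i <;> fin_cases j <;> simp <;>
      first | ring1 | linear_combination h1 | linear_combination h2

set_option maxHeartbeats 1000000 in
/-- In `G = SO(2) ⋉ ℝ²`, the centralizer of any non-commutative subgroup `H ≤ G`
is trivial. -/
theorem centralizer_of_noncomm_trivial
    (H : Subgroup (GL (Fin 3) ℝ)) (hH : (H : Set (GL (Fin 3) ℝ)) ⊆ affSO2)
    (hnc : ∃ a ∈ H, ∃ b ∈ H, a * b ≠ b * a) :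
    ∀ g : GL (Fin 3) ℝ, g ∈ affSO2 → (∀ h ∈ H, g * h = h * g) → g = 1 := by
  intro g hg hcomm
  obtain ⟨S, v, hS, hgm⟩ := hg
  obtain ⟨s, t, hst, rfl⟩ := so2_elim hS
  rw [mkAff_eq] at hgm
  have hdata : ∀ h : GL (Fin 3) ℝ, h ∈ H → ∃ a b p0 p1 : ℝ, a^2 + b^2 = 1 ∧
      (h : Matrix (Fin 3) (Fin 3) ℝ) = !![a, -b, p0; b, a, p1; 0, 0, 1] := by
    intro h hh
    obtain ⟨R, w, hR, hm⟩ := hH hh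
    obtain ⟨a, b, hab, rfl⟩ := so2_elim hR
    exact ⟨a, b, w 0, w 1, hab, by rw [hm, mkAff_eq]⟩
  obtain ⟨h1, hh1, h2, hh2, hne⟩ := hnc
  obtain ⟨a, b, p0, p1, hab, hm1⟩ := hdata h1 hh1
  obtain ⟨c, d, q0, q1, hcd, hm2⟩ := hdata h2 hh2
  have hne' : ¬ (a * q0 - b * q1 + p0 = c * p0 - d * p1 + q0 ∧
      b * q0 + a * q1 + p1 = d * p0 + c * p1 + q1) := by
    intro hcon
    apply hne
    apply Units.ext
    rw [Units.val_mul, Units.val_mul, hm1, hm2]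
    exact (comm_iff a b p0 p1 c d q0 q1).mpr hcon
  have hcent : ∀ h : GL (Fin 3) ℝ, h ∈ H → ∀ x y w0 w1 : ℝ,
      (h : Matrix (Fin 3) (Fin 3) ℝ) = !![x, -y, w0; y, x, w1; 0, 0, 1] →
      (s * w0 - t * w1 + v 0 = x * v 0 - y * v 1 + w0 ∧
       t * w0 + s * w1 + v 1 = y * v 0 + x * v 1 + w1) := by
    intro h hh x y w0 w1 hm
    have := congrArg (Units.val) (hcomm h hh)
    rw [Units.val_mul, Units.val_mul, hgm, hm] at this
    exact (comm_iff s t (v 0) (v 1) x y w0 w1).mp this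
  obtain ⟨cp1, cp2⟩ := hcent h1 hh1 a b p0 p1 hm1
  obtain ⟨cq1, cq2⟩ := hcent h2 hh2 c d q0 q1 hm2
  by_cases hk : (s - 1)^2 + t^2 = 0
  · have hs : s = 1 := by nlinarith [sq_nonneg (s - 1), sq_nonneg t]
    have ht : t = 0 := by nlinarith [sq_nonneg (s - 1), sq_nonneg t]
    by_cases hv : v 0 = 0 ∧ v 1 = 0
    · apply Units.ext
      rw [hgm, hv.1, hv.2, hs, ht, Units.val_one, Matrix.one_fin_three]
      norm_num
    · exfalso
      have hv2 : (v 0)^2 + (v 1)^2 > 0 := by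
        rcases not_and_or.mp hv with h | h <;> positivity
      have fix : ∀ x y : ℝ, (x - 1) * v 0 - y * v 1 = 0 →
          y * v 0 + (x - 1) * v 1 = 0 → x = 1 ∧ y = 0 := by
        intro x y e1 e2
        have key : ((x - 1)^2 + y^2) * ((v 0)^2 + (v 1)^2) = 0 := by
          linear_combination ((x - 1) * v 0 - y * v 1) * e1 +
            (y * v 0 + (x - 1) * v 1) * e2
        have z : (x - 1)^2 + y^2 = 0 := by
          rcases mul_eq_zero.mp key with h | h
          · exact h
          · exact absurd h hv2.ne'
        constructor
        · nlinarith [sq_nonneg (x - 1), sq_nonneg y, z]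
        · nlinarith [sq_nonneg (x - 1), sq_nonneg y, z]
      obtain ⟨ha1, hb0⟩ := fix a b
        (by linear_combination -cp1 + p0 * hs - p1 * ht)
        (by linear_combination -cp2 + p0 * ht + p1 * hs)
      obtain ⟨hc1, hd0⟩ := fix c d
        (by linear_combination -cq1 + q0 * hs - q1 * ht)
        (by linear_combination -cq2 + q0 * ht + q1 * hs)
      exact hne' ⟨by rw [ha1, hb0, hc1, hd0]; ring, by rw [ha1, hb0, hc1, hd0]; ring⟩
  · exfalso
    apply hne'
    constructor
    · refine mul_left_cancel₀ hk ?_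
      linear_combination ((a - 1) * (s - 1) + b * t) * cq1 + ((a - 1) * t - b * (s - 1)) * cq2 -
        ((c - 1) * (s - 1) + d * t) * cp1 - ((c - 1) * t - d * (s - 1)) * cp2
    · refine mul_left_cancel₀ hk ?_
      linear_combination (b * (s - 1) - (a - 1) * t) * cq1 + (b * t + (a - 1) * (s - 1)) * cq2 -
        (d * (s - 1) - (c - 1) * t) * cp1 - (d * t + (c - 1) * (s - 1)) * cp2
end

section
/- Let Γ be a group, u : Γ → SO(2) a group homomorphism, and c : Γ → ℝ² a map such that the set { c(g h) − u(g) c(h) − c(g) : g, h ∈ Γ } is bounded in ℝ² (c is a u-quasicocycle). Define f : Γ → GL_3(ℝ) by f(γ) := [[u(γ), c(γ)], [0, 1]] (block form). Then f is a quasihomomorphism; more precisely, there is a bounded subset K ⊆ ℝ² such that the defect set D_f is contained in { [[I, w], [0, 1]] : w ∈ K }. -/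
/-!
Since `u` is a homomorphism, the linear part of `f(y)⁻¹ f(x)⁻¹ f(xy)` is the identity, so the
defect is a translation; its vector is the quasicocycle defect `c(xy) - u(x) c(y) - c(x)` pulled
back by `u(xy)⁻¹ = u(xy)ᵀ`. An orthogonal matrix has entries of absolute value at most `1`, so
these vectors stay in a fixed ball, whose image under `w ↦ [[I, w], [0, 1]]` is compact.
-/

open scoped MatrixGroups
open Matrix

lemma mkAff_mul (R R' : Matrix (Fin 2) (Fin 2) ℝ) (v v' : Fin 2 → ℝ) :
    mkAff R v * mkAff R' v' = mkAff (R * R') (R *ᵥ v' + v) := by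
  ext i j
  fin_cases i <;> fin_cases j <;>
    simp [mkAff, mul_apply, Fin.sum_univ_three, mulVec, dotProduct]

lemma mkAff_one_zero : mkAff 1 0 = 1 := by
  ext i j
  fin_cases i <;> fin_cases j <;> simp [mkAff, one_apply]

lemma continuous_mkAff_one : Continuous (mkAff 1) := by
  refine continuous_matrix fun i j => ?_
  simp only [mkAff, of_apply]
  split_ifs
  exacts [continuous_const, continuous_apply _, continuous_const, continuous_const]

noncomputable def translationGL (w : Fin 2 → ℝ) : GL (Fin 3) ℝ :=
  ⟨mkAff 1 w, mkAff 1 (-w), by simp [mkAff_mul, mkAff_one_zero],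
    by simp [mkAff_mul, mkAff_one_zero]⟩

@[simp]
lemma coe_translationGL (w : Fin 2 → ℝ) :
    (translationGL w : Matrix (Fin 3) (Fin 3) ℝ) = mkAff 1 w :=
  rfl

lemma continuous_translationGL : Continuous translationGL :=
  Units.continuous_iff.2 ⟨continuous_mkAff_one, continuous_mkAff_one.comp continuous_neg⟩

lemma inv_mul_inv_mul_eq_translationGL {F G H : GL (Fin 3) ℝ} {R R' : Matrix (Fin 2) (Fin 2) ℝ}
    {v v' v'' : Fin 2 → ℝ} (hF : (F : Matrix (Fin 3) (Fin 3) ℝ) = mkAff R v)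
    (hG : (G : Matrix (Fin 3) (Fin 3) ℝ) = mkAff R' v')
    (hH : (H : Matrix (Fin 3) (Fin 3) ℝ) = mkAff (R * R') v'')
    (horth : (R * R') * (R * R')ᵀ = 1) :
    G⁻¹ * F⁻¹ * H = translationGL ((R * R')ᵀ *ᵥ (v'' - R *ᵥ v' - v)) := by
  rw [← _root_.mul_inv_rev, inv_mul_eq_iff_eq_mul]
  refine Units.ext ?_
  rw [Units.val_mul, Units.val_mul, hF, hG, hH, coe_translationGL, mkAff_mul, mkAff_mul,
    mul_one, mulVec_mulVec, horth, one_mulVec]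
  congr 1
  abel

lemma norm_mulVec_le_of_mem_unitaryGroup {𝕜 n : Type*} [RCLike 𝕜] [Fintype n] [DecidableEq n]
    {U : Matrix n n 𝕜} (hU : U ∈ unitaryGroup n 𝕜) (v : n → 𝕜) :
    ‖U *ᵥ v‖ ≤ Fintype.card n * ‖v‖ := by
  refine (pi_norm_le_iff_of_nonneg (by positivity)).2 fun i => ?_
  calc ‖(U *ᵥ v) i‖ = ‖∑ j, U i j * v j‖ := rfl
    _ ≤ ∑ j, ‖U i j‖ * ‖v j‖ := (norm_sum_le _ _).trans_eq (by simp only [norm_mul])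
    _ ≤ ∑ _j : n, 1 * ‖v‖ := by
        gcongr with j
        exacts [entry_norm_bound_of_unitary hU i j, norm_le_pi_norm v j]
    _ = Fintype.card n * ‖v‖ := by simp

lemma IsSO2.mul_transpose_self {R : Matrix (Fin 2) (Fin 2) ℝ} (hR : IsSO2 R) : R * Rᵀ = 1 :=
  mul_eq_one_comm.1 hR.1

lemma IsSO2.transpose_mem_unitaryGroup {R : Matrix (Fin 2) (Fin 2) ℝ} (hR : IsSO2 R) :
    Rᵀ ∈ unitaryGroup (Fin 2) ℝ := by
  rw [mem_unitaryGroup_iff, star_eq_conjTranspose, conjTranspose_eq_transpose_of_trivial,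
    transpose_transpose]
  exact hR.1

/-- If `u : Γ → SO(2)` is a homomorphism and `c : Γ → ℝ²` a `u`-quasicocycle, then
`γ ↦ [[u(γ), c(γ)], [0, 1]]` is a quasihomomorphism whose defect set consists of
translations `[[I, w], [0, 1]]` with `w` in a bounded subset of `ℝ²`. -/
theorem quasicocycle_gives_quasihomomorphism {Γ : Type*} [Group Γ]
    (u : Γ → Matrix (Fin 2) (Fin 2) ℝ)
    (huhom : ∀ g h : Γ, u (g * h) = u g * u h)
    (huSO : ∀ g : Γ, IsSO2 (u g))
    (c : Γ → Fin 2 → ℝ)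
    (hqc : ∃ K : Set (Fin 2 → ℝ), IsCompact K ∧
      ∀ g h : Γ, c (g * h) - (u g).mulVec (c h) - c g ∈ K)
    (f : Γ → GL (Fin 3) ℝ)
    (hf : ∀ γ : Γ, (f γ : Matrix (Fin 3) (Fin 3) ℝ) = mkAff (u γ) (c γ)) :
    (∃ K : Set (GL (Fin 3) ℝ), IsCompact K ∧ defectSet f ⊆ K) ∧
    ∃ K : Set (Fin 2 → ℝ),
      (∃ K' : Set (Fin 2 → ℝ), IsCompact K' ∧ K ⊆ K') ∧
      defectSet f ⊆
        {g : GL (Fin 3) ℝ | ∃ w ∈ K, (g : Matrix (Fin 3) (Fin 3) ℝ) = mkAff 1 w} := by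
  obtain ⟨K₀, hK₀, hcK₀⟩ := hqc
  obtain ⟨C, hC⟩ := hK₀.isBounded.subset_closedBall 0
  have hbound (x y : Γ) : ‖(u (x * y))ᵀ *ᵥ (c (x * y) - u x *ᵥ c y - c x)‖ ≤ 2 * C := by
    have hd : ‖c (x * y) - u x *ᵥ c y - c x‖ ≤ C := mem_closedBall_zero_iff.1 (hC (hcK₀ x y))
    have := norm_mulVec_le_of_mem_unitaryGroup (huSO (x * y)).transpose_mem_unitaryGroup
      (c (x * y) - u x *ᵥ c y - c x)
    rw [Fintype.card_fin, Nat.cast_ofNat] at this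
    linarith
  have hdefect : defectSet f ⊆ translationGL '' Metric.closedBall 0 (2 * C) := by
    rintro _ ⟨x, y, rfl⟩
    have horth := (huSO (x * y)).mul_transpose_self
    rw [huhom] at horth
    rw [inv_mul_inv_mul_eq_translationGL (hf x) (hf y) (by rw [hf, huhom]) horth, ← huhom]
    exact Set.mem_image_of_mem _ (mem_closedBall_zero_iff.2 (hbound x y))
  refine ⟨⟨_, (isCompact_closedBall _ _).image continuous_translationGL, hdefect⟩,
    _, ⟨_, isCompact_closedBall 0 (2 * C), subset_rfl⟩, fun g hg => ?_⟩
  obtain ⟨w, hw, rfl⟩ := hdefect hg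
  exact ⟨w, hw, rfl⟩
end
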